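/- arXiv:1301.2942 — 4 statements merged into one kernel-verified Lean document; each statement's English description precedes it below -/
import Mathlib

section
/- Let n ≥ 2 and let (σ_H, g, σ′) be an admissible triple. Then the map σ_n : G(n) × G(n) → 𝕋 defined via the unique factorizations by σ_n(a′b, ab′) = σ_H(a′, α_b(a)) · g(a,b) · σ′(b,b′) for all a, a′ ∈ H(n) and b, b′ ∈ G(n−1) is a multiplier of G(n). -/
open scoped BigOperators

namespace FreeNilp

/-- Index set for pairs `(j,k)` with `j < k`. -/
abbrev PairIdx (n : ℕ) : Type := {p : Fin n × Fin n // p.1 < p.2}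

/-- The free nilpotent group of class 2 and rank `n`, realized on
`ℤ^n × ℤ^{n(n-1)/2}`. -/
@[ext] structure G (n : ℕ) where
  u : Fin n → ℤ
  v : PairIdx n → ℤ

namespace G

instance (n : ℕ) : Group (G n) where
  mul r s := ⟨fun i => r.u i + s.u i, fun p => r.v p + s.v p + r.u p.1.1 * s.u p.1.2⟩
  one := ⟨fun _ => 0, fun _ => 0⟩
  inv r := ⟨fun i => -r.u i, fun p => -r.v p + r.u p.1.1 * r.u p.1.2⟩
  mul_assoc r s t := by
    refine G.ext ?_ ?_ <;> funext x
    · show (r.u x + s.u x) + t.u x = r.u x + (s.u x + t.u x)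
      ring
    · show (r.v x + s.v x + r.u x.1.1 * s.u x.1.2) + t.v x +
          (r.u x.1.1 + s.u x.1.1) * t.u x.1.2 =
        r.v x + (s.v x + t.v x + s.u x.1.1 * t.u x.1.2) +
          r.u x.1.1 * (s.u x.1.2 + t.u x.1.2)
      ring
  one_mul r := by
    refine G.ext ?_ ?_ <;> funext x
    · show 0 + r.u x = r.u x
      ring
    · show 0 + r.v x + 0 * r.u x.1.2 = r.v x
      ring
  mul_one r := by
    refine G.ext ?_ ?_ <;> funext x
    · show r.u x + 0 = r.u x
      ring
    · show r.v x + 0 + r.u x.1.1 * 0 = r.v x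
      ring
  inv_mul_cancel r := by
    refine G.ext ?_ ?_ <;> funext x
    · show -r.u x + r.u x = 0
      ring
    · show (-r.v x + r.u x.1.1 * r.u x.1.2) + r.v x + -r.u x.1.1 * r.u x.1.2 = 0
      ring

@[simp] lemma mul_u {n : ℕ} (r s : G n) (i : Fin n) : (r * s).u i = r.u i + s.u i := rfl
@[simp] lemma mul_v {n : ℕ} (r s : G n) (p : PairIdx n) :
    (r * s).v p = r.v p + s.v p + r.u p.1.1 * s.u p.1.2 := rfl
@[simp] lemma one_u {n : ℕ} (i : Fin n) : (1 : G n).u i = 0 := rfl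
@[simp] lemma one_v {n : ℕ} (p : PairIdx n) : (1 : G n).v p = 0 := rfl
@[simp] lemma inv_u {n : ℕ} (r : G n) (i : Fin n) : (r⁻¹).u i = -r.u i := rfl
@[simp] lemma inv_v {n : ℕ} (r : G n) (p : PairIdx n) :
    (r⁻¹).v p = -r.v p + r.u p.1.1 * r.u p.1.2 := rfl

end G

/-- First-block coordinate `r_i`. -/
def uc {n : ℕ} (r : G n) (i : Fin n) : ℤ := r.u i

/-- Second-block coordinate `r_{jk}` (zero unless `j < k`). -/
def vc {n : ℕ} (r : G n) (j k : Fin n) : ℤ := if h : j < k then r.v ⟨(j, k), h⟩ else 0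

/-- A multiplier (2-cocycle with values in the circle group) of a group. -/
def IsMultiplier {Γ : Type*} [Group Γ] (σ : Γ → Γ → Circle) : Prop :=
  (∀ r s t : Γ, σ r s * σ (r * s) t = σ r (s * t) * σ s t) ∧
  ∀ r : Γ, σ r 1 = 1 ∧ σ 1 r = 1

/-- Similarity (cohomology) of multipliers. -/
def Similar {Γ : Type*} [Group Γ] (σ τ : Γ → Γ → Circle) : Prop :=
  ∃ β : Γ → Circle, ∀ r s : Γ, τ r s = β r * β s * (β (r * s))⁻¹ * σ r s

/-- The subgroup `H(n) ≅ ℤⁿ` of `G n`: only the coordinates `r_n` and `r_{jn}` may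
be nonzero. -/
def Hsub (n : ℕ) : Subgroup (G n) where
  carrier := {r | (∀ i : Fin n, (i : ℕ) + 1 < n → r.u i = 0) ∧
                  ∀ p : PairIdx n, (p.1.2 : ℕ) + 1 < n → r.v p = 0}
  one_mem' := ⟨fun _ _ => rfl, fun _ _ => rfl⟩
  mul_mem' := by
    rintro r s ⟨hr1, hr2⟩ ⟨hs1, hs2⟩
    refine ⟨fun i hi => ?_, fun p hp => ?_⟩
    · simp [hr1 i hi, hs1 i hi]
    · simp [hr2 p hp, hs2 p hp, hs1 p.1.2 hp]
  inv_mem' := by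
    rintro r ⟨hr1, hr2⟩
    refine ⟨fun i hi => ?_, fun p hp => ?_⟩
    · simp [hr1 i hi]
    · simp [hr2 p hp, hr1 p.1.2 hp]

/-- The subgroup `G(n-1)` of `G n`: the coordinates `r_n` and `r_{jn}` vanish. -/
def Gsub (n : ℕ) : Subgroup (G n) where
  carrier := {r | (∀ i : Fin n, (i : ℕ) + 1 = n → r.u i = 0) ∧
                  ∀ p : PairIdx n, (p.1.2 : ℕ) + 1 = n → r.v p = 0}
  one_mem' := ⟨fun _ _ => rfl, fun _ _ => rfl⟩
  mul_mem' := by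
    rintro r s ⟨hr1, hr2⟩ ⟨hs1, hs2⟩
    refine ⟨fun i hi => ?_, fun p hp => ?_⟩
    · simp [hr1 i hi, hs1 i hi]
    · simp [hr2 p hp, hs2 p hp, hs1 p.1.2 hp]
  inv_mem' := by
    rintro r ⟨hr1, hr2⟩
    refine ⟨fun i hi => ?_, fun p hp => ?_⟩
    · simp [hr1 i hi]
    · simp [hr2 p hp, hr1 p.1.2 hp]

lemma mem_Hsub_iff {n : ℕ} {r : G n} :
    r ∈ Hsub n ↔ (∀ i : Fin n, (i : ℕ) + 1 < n → r.u i = 0) ∧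
      ∀ p : PairIdx n, (p.1.2 : ℕ) + 1 < n → r.v p = 0 := Iff.rfl

lemma mem_Gsub_iff {n : ℕ} {r : G n} :
    r ∈ Gsub n ↔ (∀ i : Fin n, (i : ℕ) + 1 = n → r.u i = 0) ∧
      ∀ p : PairIdx n, (p.1.2 : ℕ) + 1 = n → r.v p = 0 := Iff.rfl

/-- `H(n)` is a normal subgroup; conjugation preserves it. -/
lemma conj_mem_Hsub {n : ℕ} (s : G n) {a : G n} (ha : a ∈ Hsub n) :
    s * a * s⁻¹ ∈ Hsub n := by
  obtain ⟨ha1, ha2⟩ := ha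
  refine ⟨fun i hi => ?_, fun p hp => ?_⟩
  · simp [ha1 i hi]
  · have hj : (p.1.1 : ℕ) + 1 < n := by
      have h2 : (p.1.1 : ℕ) < (p.1.2 : ℕ) := p.2
      omega
    simp [ha2 p hp, ha1 p.1.2 hp, ha1 p.1.1 hj]

/-- The action `α_b(a) = b a b⁻¹` of `G(n-1)` on `H(n)`. -/
def conjH {n : ℕ} (b : Gsub n) (a : Hsub n) : Hsub n :=
  ⟨(b : G n) * (a : G n) * (b : G n)⁻¹, conj_mem_Hsub _ a.2⟩

/-- The `H(n)`-part of the unique factorization `r = a·b`, `a ∈ H(n)`, `b ∈ G(n-1)`. -/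
def hpart {n : ℕ} (r : G n) : Hsub n :=
  ⟨⟨fun i => if (i : ℕ) + 1 = n then r.u i else 0,
    fun p => if (p.1.2 : ℕ) + 1 = n then r.v p else 0⟩, by
    refine ⟨fun i hi => ?_, fun p hp => ?_⟩
    · exact if_neg (by omega)
    · exact if_neg (by omega)⟩

/-- The `G(n-1)`-part of the unique factorization `r = a·b`. -/
def gpart {n : ℕ} (r : G n) : Gsub n :=
  ⟨⟨fun i => if (i : ℕ) + 1 = n then 0 else r.u i,
    fun p => if (p.1.2 : ℕ) + 1 = n then 0 else r.v p⟩, by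
    refine ⟨fun i hi => ?_, fun p hp => ?_⟩
    · exact if_pos hi
    · exact if_pos hp⟩

/-- `r` indeed factors as `hpart r * gpart r`. -/
lemma hpart_mul_gpart {n : ℕ} (r : G n) : ((hpart r : G n)) * (gpart r : G n) = r := by
  refine G.ext ?_ ?_ <;> funext x
  · show (if ((x : ℕ)) + 1 = n then r.u x else 0) + (if (x : ℕ) + 1 = n then 0 else r.u x) = r.u x
    split <;> ring
  · show (if ((x.1.2 : ℕ)) + 1 = n then r.v x else 0) +
      (if (x.1.2 : ℕ) + 1 = n then 0 else r.v x) +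
      (if ((x.1.1 : ℕ)) + 1 = n then r.u x.1.1 else 0) *
        (if (x.1.2 : ℕ) + 1 = n then 0 else r.u x.1.2) = r.v x
    have h2 : (x.1.1 : ℕ) < (x.1.2 : ℕ) := x.2
    have h3 : (x.1.2 : ℕ) < n := x.1.2.isLt
    rcases eq_or_ne ((x.1.2 : ℕ) + 1) n with h | h
    · rw [if_pos h, if_pos h, if_pos h, if_neg (by omega)]; ring
    · rw [if_neg h, if_neg h, if_neg h, if_neg (show ¬((x.1.1 : ℕ) + 1 = n) by omega)]
      ring

/-- An admissible pair `(σ_H, g)` (Mackey data with trivial multiplier on `G(n-1)`). -/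
structure AdmissiblePair (n : ℕ) (σH : Hsub n → Hsub n → Circle)
    (g : Hsub n → Gsub n → Circle) : Prop where
  multH : IsMultiplier σH
  g_one_right : ∀ a : Hsub n, g a 1 = 1
  g_one_left : ∀ b : Gsub n, g 1 b = 1
  g_add : ∀ (a a' : Hsub n) (b : Gsub n),
    g (a * a') b = σH (conjH b a) (conjH b a') * (σH a a')⁻¹ * (g a b * g a' b)
  g_mul : ∀ (a : Hsub n) (b b' : Gsub n), g a (b * b') = g (conjH b' a) b * g a b'

/-- An admissible triple `(σ_H, g, σ')`. -/
def AdmissibleTriple (n : ℕ) (σH : Hsub n → Hsub n → Circle)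
    (g : Hsub n → Gsub n → Circle) (σ' : Gsub n → Gsub n → Circle) : Prop :=
  AdmissiblePair n σH g ∧ IsMultiplier σ'

/-- The map `σ_n(a′b, ab′) = σ_H(a′, α_b(a)) g(a,b) σ′(b,b′)` defined via the unique
factorizations. -/
noncomputable def sigmaN {n : ℕ} (σH : Hsub n → Hsub n → Circle) (g : Hsub n → Gsub n → Circle)
    (σ' : Gsub n → Gsub n → Circle) (r s : G n) : Circle :=
  σH (hpart r) (conjH (gpart r) (hpart s)) * g (hpart s) (gpart r) *
    σ' (gpart r) (gpart s)

/-- The map `τ(a′b, ab′) = σ_H(a′, α_b(a)) g(a,b)` defined via the unique factorizations. -/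
noncomputable def tauN {n : ℕ} (σH : Hsub n → Hsub n → Circle) (g : Hsub n → Gsub n → Circle)
    (r s : G n) : Circle :=
  σH (hpart r) (conjH (gpart r) (hpart s)) * g (hpart s) (gpart r)

/-- The generator `u_i`. -/
def uE {n : ℕ} (i : Fin n) : G n := ⟨fun j => if j = i then 1 else 0, fun _ => 0⟩

/-- The generator `v_{jk}`. -/
def vE {n : ℕ} (j k : Fin n) : G n := ⟨fun _ => 0, fun p => if p.1 = (j, k) then 1 else 0⟩

/-- The last index `n` (i.e. `n-1` in `Fin n`). -/
def lastI (n : ℕ) (hn : 0 < n) : Fin n := ⟨n - 1, by omega⟩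

/-- `u_n` as an element of `H(n)`. -/
def unH {n : ℕ} (hn : 0 < n) : Hsub n :=
  ⟨uE (lastI n hn), by
    refine ⟨fun i hi => ?_, fun p hp => rfl⟩
    have h : i ≠ lastI n hn := by
      intro h; apply absurd hi; rw [h]; show ¬ (n - 1) + 1 < n; omega
    simp [uE, h]⟩

/-- `u_i` (for `i < n`) as an element of `G(n-1)`. -/
def uiG {n : ℕ} (i : Fin n) (hi : (i : ℕ) + 1 < n) : Gsub n :=
  ⟨uE i, by
    refine ⟨fun j hj => ?_, fun p hp => rfl⟩
    have h : j ≠ i := by intro h; rw [h] at hj; omega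
    simp [uE, h]⟩

/-- `v_{in}` (for `i < n`) as an element of `H(n)`. -/
def vinH {n : ℕ} (i : Fin n) (hi : (i : ℕ) + 1 < n) : Hsub n :=
  ⟨vE i (lastI n (by omega)), by
    refine ⟨fun j hj => rfl, fun p hp => ?_⟩
    have h : p.1 ≠ (i, lastI n (by omega)) := by
      intro h
      have h2 : (p.1.2 : ℕ) = n - 1 := by rw [h]; rfl
      omega
    simp [vE, h]⟩

/-- `v_{ij}` (for `j < n`) as an element of `G(n-1)`. -/
def vijG {n : ℕ} (i j : Fin n) (hj : (j : ℕ) + 1 < n) : Gsub n :=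
  ⟨vE i j, by
    refine ⟨fun k hk => rfl, fun p hp => ?_⟩
    have h : p.1 ≠ (i, j) := by
      intro h
      have h2 : (p.1.2 : ℕ) = (j : ℕ) := by rw [h]
      omega
    simp [vE, h]⟩

/-- The "word part" `w(a)` of `a ∈ H(n)`. -/
def wH {n : ℕ} (a : Hsub n) : Hsub n :=
  ⟨⟨(a : G n).u, fun _ => 0⟩,
    ⟨fun i hi => (mem_Hsub_iff.mp a.2).1 i hi, fun _ _ => rfl⟩⟩

/-- The "central part" `z(a)` of `a ∈ H(n)`. -/
def zH {n : ℕ} (a : Hsub n) : Hsub n :=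
  ⟨⟨fun _ => 0, (a : G n).v⟩,
    ⟨fun _ _ => rfl, fun p hp => (mem_Hsub_iff.mp a.2).2 p hp⟩⟩

/-- The "word part" `w(b)` of `b ∈ G(n-1)`. -/
def wG {n : ℕ} (b : Gsub n) : Gsub n :=
  ⟨⟨(b : G n).u, fun _ => 0⟩,
    ⟨fun i hi => (mem_Gsub_iff.mp b.2).1 i hi, fun _ _ => rfl⟩⟩

/-- The "central part" `z(b)` of `b ∈ G(n-1)`. -/
def zG {n : ℕ} (b : Gsub n) : Gsub n :=
  ⟨⟨fun _ => 0, (b : G n).v⟩,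
    ⟨fun _ _ => rfl, fun p hp => (mem_Gsub_iff.mp b.2).2 p hp⟩⟩

/-- `g(v_{in}, u_j)`, as a total function (equal to `1` outside the admissible range). -/
noncomputable def gvu {n : ℕ} (g : Hsub n → Gsub n → Circle) (i j : Fin n) : Circle :=
  if h : (i : ℕ) + 1 < n ∧ (j : ℕ) + 1 < n then g (vinH i h.1) (uiG j h.2) else 1

/-- `g(u_n, v_{ij})`, as a total function (equal to `1` outside the admissible range). -/
noncomputable def guv {n : ℕ} (g : Hsub n → Gsub n → Circle) (i j : Fin n) : Circle :=
  if h : (j : ℕ) + 1 < n then g (unH (by omega)) (vijG i j h) else 1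

/-- A normalized pair `(σ_H, g)`: admissible, with `σ_H` of the standard `λ`-form, and
`g(u_n, u_i) = 1` for all `1 ≤ i ≤ n-1`. -/
def Normalized {n : ℕ} (hn : 0 < n) (σH : Hsub n → Hsub n → Circle)
    (g : Hsub n → Gsub n → Circle) (lam : Fin n → Circle) : Prop :=
  AdmissiblePair n σH g ∧
  (∀ a' a : Hsub n, σH a' a =
    ∏ i ∈ Finset.univ.filter (fun i : Fin n => (i : ℕ) + 1 < n),
      lam i ^ (uc (a' : G n) (lastI n hn) * vc (a : G n) i (lastI n hn))) ∧
  ∀ (i : Fin n) (hi : (i : ℕ) + 1 < n), g (unH hn) (uiG i hi) = 1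

/-- The multiplier `σ_λ` of `G n` attached to a family of parameters
`λ_{i,jk} ∈ 𝕋` (`1 ≤ i ≤ k`, `1 ≤ j < k ≤ n`). -/
noncomputable def sigmaLam {n : ℕ} (lam : Fin n → Fin n → Fin n → Circle) (r s : G n) : Circle :=
  (∏ t ∈ Finset.univ.filter
      (fun t : Fin n × Fin n × Fin n => t.1 < t.2.1 ∧ t.2.1 < t.2.2),
    lam t.1 t.2.1 t.2.2 ^ (vc s t.2.1 t.2.2 * uc r t.1 + uc s t.2.2 * vc r t.1 t.2.1) *
    lam t.2.1 t.1 t.2.2 ^ (vc s t.1 t.2.2 * uc r t.2.1 +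
      uc s t.2.2 * (uc r t.1 * uc r t.2.1 - vc r t.1 t.2.1))) *
  ∏ p ∈ Finset.univ.filter (fun p : Fin n × Fin n => p.1 < p.2),
    lam p.1 p.1 p.2 ^ (vc s p.1 p.2 * uc r p.1 +
      uc s p.2 * (uc r p.1 * (uc r p.1 - 1) / 2)) *
    lam p.2 p.1 p.2 ^ (uc r p.2 * (vc s p.1 p.2 + uc r p.1 * uc s p.2) +
      uc r p.1 * (uc s p.2 * (uc s p.2 - 1) / 2))

/-- The extension of the parameter family to indices `i > k`, via
`λ_{k,ij} = λ_{i,jk}⁻¹ λ_{j,ik}` for `i < j < k`. -/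
noncomputable def lamExt {n : ℕ} (lam : Fin n → Fin n → Fin n → Circle) (i j k : Fin n) : Circle :=
  if i ≤ k then lam i j k else (lam j k i)⁻¹ * lam k j i

/-! Writing `r = a b` with `a ∈ H(n)` and `b ∈ G(n-1)`, the factorization obeys
`(a b)(a' b') = (a α_b(a')) (b b')`, i.e. `r ↦ b` is a homomorphism and `r ↦ a` a crossed
homomorphism. Expanding both sides of the cocycle identity for `(a₁b₁, a₂b₂, a₃b₃)` with the two
admissibility rules for `g`, the `g`-factors and `σ_H(a₂, α_{b₂}(a₃))^{±1}` match up, and what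
remains is the cocycle identity of `σ_H` at `(a₁, α_{b₁}(a₂), α_{b₁b₂}(a₃))` times that of `σ'`
at `(b₁, b₂, b₃)`. -/

section Factorization

variable {Γ H K : Type*} [Group Γ] [Group H] [Group K]

theorem isMultiplier_of_factorization (α : K →* MulAut H) (hp : Γ → H) (gp : Γ →* K)
    (hp_mul : ∀ r s, hp (r * s) = hp r * α (gp r) (hp s))
    {σH : H → H → Circle} {g : H → K → Circle} {σ' : K → K → Circle}
    (hσH : IsMultiplier σH) (hσ' : IsMultiplier σ')
    (hg_mul_fst : ∀ a a' b, g (a * a') b = σH (α b a) (α b a') * (σH a a')⁻¹ * (g a b * g a' b))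
    (hg_mul_snd : ∀ a b b', g a (b * b') = g (α b' a) b * g a b') :
    IsMultiplier fun r s ↦ σH (hp r) (α (gp r) (hp s)) * g (hp s) (gp r) * σ' (gp r) (gp s) := by
  have hp_one : hp 1 = 1 := by simpa using hp_mul 1 1
  have hg_one_left (b : K) : g 1 b = 1 := by simpa [(hσH.2 1).1] using hg_mul_fst 1 1 b
  have hg_one_right (a : H) : g a 1 = 1 := by simpa using hg_mul_snd a 1 1
  refine ⟨fun r s t ↦ ?_, fun r ↦ ⟨?_, ?_⟩⟩
  · simp only [hp_mul, map_mul, MulAut.mul_apply, hg_mul_fst, hg_mul_snd]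
    set a := hp r
    set x := α (gp r) (hp s)
    set y := α (gp r) (α (gp s) (hp t))
    set z := σH (hp s) (α (gp s) (hp t))
    set c := g (hp s) (gp r) * g (α (gp s) (hp t)) (gp r) * g (hp t) (gp s) with hc
    calc _ = (σH a x * σH (a * x) y) * (σ' (gp r) (gp s) * σ' (gp r * gp s) (gp t)) * c := by
          rw [hc]; ac_rfl
      _ = (σH a (x * y) * σH x y) * (σ' (gp r) (gp s * gp t) * σ' (gp s) (gp t)) * c := by
          rw [hσH.1, hσ'.1]
      _ = (σH a (x * y) * σH x y) * (σ' (gp r) (gp s * gp t) * σ' (gp s) (gp t)) * c *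
            (z⁻¹ * z) := by
          rw [inv_mul_cancel, mul_one]
      _ = _ := by rw [hc]; ac_rfl
  · simp [hp_one, hg_one_left, (hσH.2 _).1, (hσ'.2 _).1]
  · simp [hp_one, hg_one_right, (hσH.2 _).2, (hσ'.2 _).2]

end Factorization

instance (n : ℕ) : (Hsub n).Normal := ⟨fun _ ha s ↦ conj_mem_Hsub s ha⟩

lemma gpart_mul {n : ℕ} (r s : G n) : gpart (r * s) = gpart r * gpart s := by
  refine Subtype.ext (G.ext (funext fun i ↦ ?_) (funext fun p ↦ ?_))
  · simp only [gpart, Subgroup.coe_mul, G.mul_u]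
    split_ifs <;> omega
  · have hp : (p.1.1 : ℕ) < p.1.2 := p.2
    simp only [gpart, Subgroup.coe_mul, G.mul_v]
    split_ifs <;> omega

lemma hpart_mul {n : ℕ} (r s : G n) :
    hpart (r * s) = hpart r * conjH (gpart r) (hpart s) := by
  have hpart_eq (r : G n) : (hpart r : G n) = r * (gpart r : G n)⁻¹ :=
    eq_mul_inv_of_mul_eq (hpart_mul_gpart r)
  refine Subtype.ext ?_
  simp only [conjH, Subgroup.coe_mul, hpart_eq, gpart_mul]
  group

theorem multiplier_of_admissibleTriple_general (n : ℕ)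
    (σH : Hsub n → Hsub n → Circle) (g : Hsub n → Gsub n → Circle)
    (σ' : Gsub n → Gsub n → Circle) (hadm : AdmissibleTriple n σH g σ') :
    IsMultiplier (sigmaN σH g σ') := by
  obtain ⟨hpair, hσ'⟩ := hadm
  exact isMultiplier_of_factorization (MulAut.conjNormal.comp (Gsub n).subtype) hpart
    (MonoidHom.mk' gpart gpart_mul) hpart_mul hpair.multH hσ' hpair.g_add hpair.g_mul

/-- For an admissible triple `(σ_H, g, σ′)`, the map
`σ_n(a′b, ab′) = σ_H(a′, α_b(a)) g(a,b) σ′(b,b′)` is a multiplier of `G(n)`. -/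
theorem multiplier_of_admissibleTriple (n : ℕ) (hn : 2 ≤ n)
    (σH : Hsub n → Hsub n → Circle) (g : Hsub n → Gsub n → Circle)
    (σ' : Gsub n → Gsub n → Circle) (hadm : AdmissibleTriple n σH g σ') :
    IsMultiplier (sigmaN σH g σ') :=
  multiplier_of_admissibleTriple_general n σH g σ' hadm

end FreeNilp
end

section
/- Let n ≥ 2. Every multiplier of G(n) is similar to a multiplier of the form σ_n(a′b, ab′) = σ_H(a′, α_b(a)) · g(a,b) · σ′(b,b′) (a, a′ ∈ H(n), b, b′ ∈ G(n−1)) for some admissible triple (σ_H, g, σ′). -/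
/-! Mackey's argument for the semidirect product `G(n) = H(n) ⋊ G(n-1)`. Multiplying `σ` by the
coboundary of `β(ab) = σ(a, b)` gives a similar multiplier `τ` with `τ(a, b) = 1` for all
`a ∈ H(n)`, `b ∈ G(n-1)`. For such a `τ` the cocycle identity yields
`τ(a'b, ab') = τ(a', bab⁻¹) τ(b, a) τ(b, b')`, so `τ = σ_n` for `σ_H = τ|H(n)`, `g(a, b) = τ(b, a)`
and `σ' = τ|G(n-1)`; the admissibility conditions on `g` are further instances of the cocycle
identity, using that `H(n)` is normal. -/

open scoped BigOperators

namespace FreeNilp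

section Multiplier

variable {Γ : Type*} [Group Γ]

noncomputable def mulCoboundary (β : Γ → Circle) (σ : Γ → Γ → Circle) (r s : Γ) : Circle :=
  β r * β s * (β (r * s))⁻¹ * σ r s

lemma similar_mulCoboundary (β : Γ → Circle) (σ : Γ → Γ → Circle) :
    Similar σ (mulCoboundary β σ) :=
  ⟨β, fun _ _ => rfl⟩

variable {σ : Γ → Γ → Circle}

lemma IsMultiplier.restrict (hσ : IsMultiplier σ) (S : Subgroup Γ) :
    IsMultiplier (fun a b : S => σ a b) :=
  ⟨fun r s t => hσ.1 r s t, fun r => hσ.2 r⟩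

lemma isMultiplier_mulCoboundary (hσ : IsMultiplier σ) {β : Γ → Circle} (hβ : β 1 = 1) :
    IsMultiplier (mulCoboundary β σ) := by
  refine ⟨fun r s t => ?_, fun r => ?_⟩
  · have h := congrArg Additive.ofMul (hσ.1 r s t)
    apply Additive.ofMul.injective
    simp only [mulCoboundary, ofMul_mul, ofMul_inv, mul_assoc r s t] at h ⊢
    linear_combination (norm := abel) h
  · simp [mulCoboundary, hβ, hσ.2 r]

lemma IsMultiplier.exists_similar_eq_one_of_isComplement' (hσ : IsMultiplier σ)
    {H K : Subgroup Γ} (hHK : H.IsComplement' K) :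
    ∃ τ, Similar σ τ ∧ IsMultiplier τ ∧ ∀ h ∈ H, ∀ k ∈ K, τ h k = 1 := by
  set β : Γ → Circle := fun r => σ (hHK.equiv r).1 (hHK.equiv r).2
  have hβ : ∀ h ∈ H, ∀ k ∈ K, β (h * k) = σ h k := fun h hh k hk => by
    simp only [β, show hHK.equiv (h * k) = (⟨h, hh⟩, ⟨k, hk⟩) from
      (hHK.equiv.eq_symm_apply).mp rfl]
  have hβH : ∀ h ∈ H, β h = 1 := fun h hh => by
    simpa [hσ.2 h] using hβ h hh 1 K.one_mem
  have hβK : ∀ k ∈ K, β k = 1 := fun k hk => by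
    simpa [hσ.2 k] using hβ 1 H.one_mem k hk
  refine ⟨mulCoboundary β σ, similar_mulCoboundary β σ,
    isMultiplier_mulCoboundary hσ (hβH 1 H.one_mem), fun h hh k hk => ?_⟩
  simp [mulCoboundary, hβ h hh k hk, hβH h hh, hβK k hk]

end Multiplier

namespace IsMultiplier

variable {Γ : Type*} [Group Γ] {H K : Subgroup Γ} {τ : Γ → Γ → Circle} {h h' k k' : Γ}

lemma apply_mul_left_eq (hτ : IsMultiplier τ) (hHK : ∀ h ∈ H, ∀ k ∈ K, τ h k = 1)
    (hh : h ∈ H) (hk : k ∈ K) (hk' : k' ∈ K) : τ (h * k) k' = τ k k' := by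
  simpa [hHK h hh k hk, hHK h hh _ (K.mul_mem hk hk')] using hτ.1 h k k'

lemma apply_mul_right_eq (hτ : IsMultiplier τ) (hHK : ∀ h ∈ H, ∀ k ∈ K, τ h k = 1)
    (hh : h ∈ H) (hh' : h' ∈ H) (hk : k ∈ K) : τ h (h' * k) = τ h h' := by
  simpa [hHK h' hh' k hk, hHK _ (H.mul_mem hh hh') k hk] using (hτ.1 h h' k).symm

variable [H.Normal]

lemma apply_mul_right_eq_mul (hτ : IsMultiplier τ) (hHK : ∀ h ∈ H, ∀ k ∈ K, τ h k = 1)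
    (hk : k ∈ K) (hh : h ∈ H) (hk' : k' ∈ K) : τ k (h * k') = τ k h * τ k k' := by
  have hconj : τ (k * h) k' = τ k k' := by
    simpa using hτ.apply_mul_left_eq hHK (‹H.Normal›.conj_mem h hh k) hk hk'
  simpa [hconj, hHK h hh k' hk'] using (hτ.1 k h k').symm

lemma apply_mul_mul (hτ : IsMultiplier τ) (hHK : ∀ h ∈ H, ∀ k ∈ K, τ h k = 1)
    (hh' : h' ∈ H) (hk : k ∈ K) (hh : h ∈ H) (hk' : k' ∈ K) :
    τ (h' * k) (h * k') = τ h' (k * h * k⁻¹) * τ k h * τ k k' := by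
  have hconj : τ h' (k * (h * k')) = τ h' (k * h * k⁻¹) := by
    rw [show k * (h * k') = k * h * k⁻¹ * (k * k') by group]
    exact hτ.apply_mul_right_eq hHK hh' (‹H.Normal›.conj_mem h hh k) (K.mul_mem hk hk')
  have hcoc := hτ.1 h' k (h * k')
  rw [hHK h' hh' k hk, one_mul, hconj, hτ.apply_mul_right_eq_mul hHK hk hh hk'] at hcoc
  rw [hcoc, ← mul_assoc (τ h' _)]

lemma apply_mul_right_eq_conj (hτ : IsMultiplier τ) (hHK : ∀ h ∈ H, ∀ k ∈ K, τ h k = 1)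
    (hk : k ∈ K) (hh : h ∈ H) (hh' : h' ∈ H) :
    τ k (h * h') = τ (k * h * k⁻¹) (k * h' * k⁻¹) * (τ h h')⁻¹ * (τ k h * τ k h') := by
  have hA := ‹H.Normal›.conj_mem h hh k
  have hA' := ‹H.Normal›.conj_mem h' hh' k
  have hconj : τ (k * h) h' = τ (k * h * k⁻¹) (k * h' * k⁻¹) * τ k h' := by
    have hcoc := hτ.1 (k * h * k⁻¹) k h'
    have hA'k := hτ.apply_mul_right_eq hHK hA hA' hk
    rw [inv_mul_cancel_right] at hA'k
    rwa [hHK _ hA k hk, one_mul, inv_mul_cancel_right, hA'k] at hcoc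
  have hcoc := hτ.1 k h h'
  rw [hconj] at hcoc
  rw [← mul_inv_eq_of_eq_mul hcoc]
  ac_rfl

lemma apply_mul_left_eq_conj (hτ : IsMultiplier τ) (hHK : ∀ h ∈ H, ∀ k ∈ K, τ h k = 1)
    (hk : k ∈ K) (hk' : k' ∈ K) (hh : h ∈ H) :
    τ (k * k') h = τ k (k' * h * k'⁻¹) * τ k' h := by
  have hcoc := hτ.1 k k' h
  have hsplit := hτ.apply_mul_right_eq_mul hHK hk (‹H.Normal›.conj_mem h hh k') hk'
  rw [inv_mul_cancel_right] at hsplit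
  rw [hsplit, mul_comm (τ k _) (τ k k'), mul_assoc (τ k k')] at hcoc
  exact mul_left_cancel hcoc

end IsMultiplier

instance inst_s1 (n : ℕ) : (Hsub n).Normal :=
  ⟨fun _ ha s => conj_mem_Hsub s ha⟩

lemma disjoint_Hsub_Gsub (n : ℕ) : Disjoint (Hsub n) (Gsub n) := by
  rw [Subgroup.disjoint_def]
  rintro r ⟨hHu, hHv⟩ ⟨hGu, hGv⟩
  refine G.ext (funext fun i => ?_) (funext fun p => ?_)
  · rcases (Nat.succ_le_of_lt i.isLt).lt_or_eq with hi | hi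
    exacts [hHu i hi, hGu i hi]
  · rcases (Nat.succ_le_of_lt p.1.2.isLt).lt_or_eq with hp | hp
    exacts [hHv p hp, hGv p hp]

lemma isComplement'_Hsub_Gsub (n : ℕ) : (Hsub n).IsComplement' (Gsub n) :=
  Subgroup.isComplement'_of_disjoint_and_mul_eq_univ (disjoint_Hsub_Gsub n) <|
    Set.eq_univ_of_forall fun r => ⟨_, (hpart r).2, _, (gpart r).2, hpart_mul_gpart r⟩

section Normalized

variable {n : ℕ} {τ : G n → G n → Circle}

lemma admissiblePair_of_eq_one (hτ : IsMultiplier τ)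
    (hHG : ∀ a ∈ Hsub n, ∀ b ∈ Gsub n, τ a b = 1) :
    AdmissiblePair n (fun a a' => τ a a') (fun a b => τ b a) where
  multH := hτ.restrict (Hsub n)
  g_one_right a := (hτ.2 a).2
  g_one_left b := (hτ.2 b).1
  g_add a a' b := hτ.apply_mul_right_eq_conj hHG b.2 a.2 a'.2
  g_mul a b b' := hτ.apply_mul_left_eq_conj hHG b.2 b'.2 a.2

lemma sigmaN_eq_of_eq_one (hτ : IsMultiplier τ)
    (hHG : ∀ a ∈ Hsub n, ∀ b ∈ Gsub n, τ a b = 1) :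
    sigmaN (fun a a' => τ a a') (fun a b => τ b a) (fun b b' => τ b b') = τ := by
  ext1 r; ext1 s
  conv_rhs => rw [← hpart_mul_gpart r, ← hpart_mul_gpart s]
  exact (hτ.apply_mul_mul hHG (hpart r).2 (gpart r).2 (hpart s).2 (gpart s).2).symm

end Normalized

theorem every_multiplier_similar_to_sigmaN_general (n : ℕ)
    (σ : G n → G n → Circle) (hσ : IsMultiplier σ) :
    ∃ (σH : Hsub n → Hsub n → Circle) (g : Hsub n → Gsub n → Circle)
      (σ' : Gsub n → Gsub n → Circle),
      AdmissibleTriple n σH g σ' ∧ Similar σ (sigmaN σH g σ') := by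
  obtain ⟨τ, hστ, hτ, hHG⟩ :=
    hσ.exists_similar_eq_one_of_isComplement' (isComplement'_Hsub_Gsub n)
  refine ⟨fun a a' => τ a a', fun a b => τ b a, fun b b' => τ b b',
    ⟨admissiblePair_of_eq_one hτ hHG, hτ.restrict (Gsub n)⟩, ?_⟩
  rwa [sigmaN_eq_of_eq_one hτ hHG]

/-- Every multiplier of `G(n)` is similar to one of the form
`σ_n(a′b, ab′) = σ_H(a′, α_b(a)) g(a,b) σ′(b,b′)` for some admissible triple. -/
theorem every_multiplier_similar_to_sigmaN (n : ℕ) (hn : 2 ≤ n)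
    (σ : G n → G n → Circle) (hσ : IsMultiplier σ) :
    ∃ (σH : Hsub n → Hsub n → Circle) (g : Hsub n → Gsub n → Circle)
      (σ' : Gsub n → Gsub n → Circle),
      AdmissibleTriple n σH g σ' ∧ Similar σ (sigmaN σH g σ') :=
  every_multiplier_similar_to_sigmaN_general n σ hσ

end FreeNilp
end

section
/- Let n ≥ 2, let λ_1, …, λ_{n−1} ∈ 𝕋 and μ_{jk} ∈ 𝕋 for 1 ≤ j < k ≤ n−1, and let σ_H be the multiplier of H(n) given by σ_H(a′, a) = ∏_{1≤i≤n−1} λ_i^{a′_n a_{in}} · ∏_{1≤j<k≤n−1} μ_{jk}^{a′_{jn} a_{kn}}. If there exists g : H(n) × G(n−1) → 𝕋 such that (σ_H, g) is an admissible pair, then μ_{jk} = 1 for all 1 ≤ j < k ≤ n−1, and g satisfies g(a+a′, b) = (∏_{i=1}^{n−1} λ_i^{b_i a_n a′_n}) g(a,b) g(a′,b) for all a, a′ ∈ H(n) and b ∈ G(n−1). -/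
open scoped BigOperators

namespace FreeNilp

lemma lt_lastI_iff {n : ℕ} (hn : 0 < n) (i : Fin n) : i < lastI n hn ↔ (i : ℕ) + 1 < n := by
  rw [Fin.lt_def]
  change (i : ℕ) < n - 1 ↔ _
  omega

lemma Hsub_mul_comm {n : ℕ} (a a' : Hsub n) : a * a' = a' * a := by
  have hu : ∀ (x : Hsub n) (p : PairIdx n), (x : G n).u p.1.1 = 0 := fun x p =>
    (mem_Hsub_iff.mp x.2).1 p.1.1 (by have := Fin.lt_def.mp p.2; omega)
  refine Subtype.ext (G.ext ?_ ?_) <;> funext x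
  · exact add_comm _ _
  · change (a : G n).v x + (a' : G n).v x + (a : G n).u x.1.1 * (a' : G n).u x.1.2 =
      (a' : G n).v x + (a : G n).v x + (a' : G n).u x.1.1 * (a : G n).u x.1.2
    rw [hu a x, hu a' x]
    ring

lemma AdmissiblePair.sigma_conjH_swap {n : ℕ} {σH : Hsub n → Hsub n → Circle}
    {g : Hsub n → Gsub n → Circle} (hadm : AdmissiblePair n σH g) (a a' : Hsub n)
    (b : Gsub n) :
    σH (conjH b a) (conjH b a') * σH a' a = σH (conjH b a') (conjH b a) * σH a a' := by
  have h := (hadm.g_add a a' b).symm.trans (Hsub_mul_comm a a' ▸ hadm.g_add a' a b)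
  rw [mul_comm (g a' b)] at h
  simpa only [← div_eq_mul_inv, div_eq_div_iff_mul_eq_mul] using mul_right_cancel h

section Coordinates

variable {n : ℕ} (hn : 0 < n)

lemma uc_conjH (b : Gsub n) (a : Hsub n) (i : Fin n) :
    uc (conjH b a : G n) i = uc (a : G n) i := by
  change (b : G n).u i + (a : G n).u i + -(b : G n).u i = (a : G n).u i
  ring

lemma vc_conjH_lastI (b : Gsub n) (a : Hsub n) {i : Fin n} (hi : i < lastI n hn) :
    vc (conjH b a : G n) i (lastI n hn) =
      vc (a : G n) i (lastI n hn) + uc (b : G n) i * uc (a : G n) (lastI n hn) := by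
  have hai : (a : G n).u i = 0 := (mem_Hsub_iff.mp a.2).1 i ((lt_lastI_iff hn i).mp hi)
  simp only [vc, dif_pos hi, conjH, G.mul_v, G.mul_u, G.inv_v, G.inv_u, uc, hai]
  ring

variable {j : Fin n} (hj : (j : ℕ) + 1 < n)

lemma uc_vinH_lastI : uc (vinH j hj : G n) (lastI n hn) = 0 := rfl

lemma vc_vinH_lastI {i : Fin n} (hi : i < lastI n hn) :
    vc (vinH j hj : G n) i (lastI n hn) = if i = j then 1 else 0 := by
  simp [vc, hi, vinH, vE]

lemma uc_unH_lastI : uc (unH hn : G n) (lastI n hn) = 1 := by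
  simp [uc, unH, uE]

lemma vc_unH (i k : Fin n) : vc (unH hn : G n) i k = 0 := by
  simp [vc, unH, uE]

lemma uc_uiG (i : Fin n) : uc (uiG j hj : G n) i = if i = j then 1 else 0 := rfl

end Coordinates

section Factors

variable {n : ℕ} (hn : 0 < n)

noncomputable def lamFactor (lam : Fin n → Circle) (a' a : Hsub n) : Circle :=
  ∏ i ∈ Finset.univ.filter (fun i : Fin n => (i : ℕ) + 1 < n),
    lam i ^ (uc (a' : G n) (lastI n hn) * vc (a : G n) i (lastI n hn))

noncomputable def muFactor (mu : Fin n → Fin n → Circle) (a' a : Hsub n) : Circle :=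
  ∏ p ∈ Finset.univ.filter (fun p : Fin n × Fin n => p.1 < p.2 ∧ (p.2 : ℕ) + 1 < n),
    mu p.1 p.2 ^ (vc (a' : G n) p.1 (lastI n hn) * vc (a : G n) p.2 (lastI n hn))

lemma lamFactor_conjH (lam : Fin n → Circle) (b : Gsub n) (a a' : Hsub n) :
    lamFactor hn lam (conjH b a) (conjH b a') =
      (∏ i ∈ Finset.univ.filter (fun i : Fin n => (i : ℕ) + 1 < n),
        lam i ^ (uc (b : G n) i * (uc (a : G n) (lastI n hn) * uc (a' : G n) (lastI n hn)))) *
      lamFactor hn lam a a' := by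
  rw [lamFactor, lamFactor, ← Finset.prod_mul_distrib]
  refine Finset.prod_congr rfl fun i hi => ?_
  have hi' : i < lastI n hn := (lt_lastI_iff hn i).mpr (Finset.mem_filter.mp hi).2
  rw [uc_conjH, vc_conjH_lastI hn _ _ hi', ← zpow_add]
  ring_nf

lemma lamFactor_conjH_swap (lam : Fin n → Circle) (b : Gsub n) (a a' : Hsub n) :
    lamFactor hn lam (conjH b a) (conjH b a') * lamFactor hn lam a' a =
      lamFactor hn lam (conjH b a') (conjH b a) * lamFactor hn lam a a' := by
  rw [lamFactor_conjH, lamFactor_conjH]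
  simp only [mul_comm (uc (a' : G n) (lastI n hn))]
  ac_rfl

lemma muFactor_eq_ite {mu : Fin n → Fin n → Circle} {x y : Hsub n} {j k : Fin n}
    (hk : (k : ℕ) + 1 < n)
    (hx : ∀ i < lastI n hn, vc (x : G n) i (lastI n hn) = if i = j then 1 else 0)
    (hy : ∀ i < lastI n hn, vc (y : G n) i (lastI n hn) = if i = k then 1 else 0) :
    muFactor hn mu x y = if j < k then mu j k else 1 := by
  calc muFactor hn mu x y
      = ∏ p ∈ Finset.univ.filter (fun p : Fin n × Fin n => p.1 < p.2 ∧ (p.2 : ℕ) + 1 < n),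
          if (j, k) = p then mu p.1 p.2 else 1 := by
        refine Finset.prod_congr rfl fun p hp => ?_
        obtain ⟨hp12, hp2⟩ := (Finset.mem_filter.mp hp).2
        have hp2' := (lt_lastI_iff hn p.2).mpr hp2
        rw [hx p.1 (hp12.trans hp2'), hy p.2 hp2']
        by_cases h1 : p.1 = j <;> by_cases h2 : p.2 = k <;> simp [h1, h2, Prod.ext_iff, eq_comm]
    _ = if j < k then mu j k else 1 := by
        rw [Finset.prod_ite_eq]
        simp [hk]

lemma muFactor_eq_one {mu : Fin n → Fin n → Circle}
    (hmu : ∀ j k : Fin n, j < k → (k : ℕ) + 1 < n → mu j k = 1) (x y : Hsub n) :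
    muFactor hn mu x y = 1 :=
  Finset.prod_eq_one fun p hp => by
    obtain ⟨hp12, hp2⟩ := (Finset.mem_filter.mp hp).2
    rw [hmu p.1 p.2 hp12 hp2, one_zpow]

variable {lam : Fin n → Circle} {mu : Fin n → Fin n → Circle}
  {σH : Hsub n → Hsub n → Circle} {g : Hsub n → Gsub n → Circle}

lemma muFactor_conjH_swap (hσH : ∀ a' a, σH a' a = lamFactor hn lam a' a * muFactor hn mu a' a)
    (hadm : AdmissiblePair n σH g) (a a' : Hsub n) (b : Gsub n) :
    muFactor hn mu (conjH b a) (conjH b a') * muFactor hn mu a' a =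
      muFactor hn mu (conjH b a') (conjH b a) * muFactor hn mu a a' := by
  have h := hadm.sigma_conjH_swap a a' b
  rw [hσH, hσH, hσH, hσH, mul_mul_mul_comm, mul_mul_mul_comm (lamFactor hn lam (conjH b a') _),
    lamFactor_conjH_swap] at h
  exact mul_left_cancel h

lemma mu_eq_one_of_admissible
    (hσH : ∀ a' a, σH a' a = lamFactor hn lam a' a * muFactor hn mu a' a)
    (hadm : AdmissiblePair n σH g) {j k : Fin n} (hjk : j < k) (hk : (k : ℕ) + 1 < n) :
    mu j k = 1 := by
  have hj : (j : ℕ) + 1 < n := by have := Fin.lt_def.mp hjk; omega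
  have hvj : ∀ i < lastI n hn, vc (conjH (uiG k hk) (vinH j hj) : G n) i (lastI n hn) =
      if i = j then 1 else 0 := fun i hi => by
    rw [vc_conjH_lastI hn _ _ hi, vc_vinH_lastI hn hj hi, uc_vinH_lastI, mul_zero, add_zero]
  have hvk : ∀ i < lastI n hn, vc (conjH (uiG k hk) (unH hn) : G n) i (lastI n hn) =
      if i = k then 1 else 0 := fun i hi => by
    rw [vc_conjH_lastI hn _ _ hi, vc_unH, uc_unH_lastI, uc_uiG, zero_add, mul_one]
  have h := muFactor_conjH_swap hn hσH hadm (vinH j hj) (unH hn) (uiG k hk)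
  rw [muFactor_eq_ite hn hk hvj hvk, muFactor_eq_ite hn hj hvk hvj, if_pos hjk,
    if_neg (lt_asymm hjk)] at h
  simpa [muFactor, vc_unH] using h

end Factors

/-- if `σ_H` (of the given `λ,μ`-form) admits an admissible `g`, then all
`μ_{jk}` are trivial, and `g` satisfies the stated addition identity. -/
theorem mu_trivial_of_admissible (n : ℕ) (hn : 2 ≤ n)
    (lam : Fin n → Circle) (mu : Fin n → Fin n → Circle)
    (σH : Hsub n → Hsub n → Circle)
    (hσH : ∀ a' a : Hsub n, σH a' a =
      (∏ i ∈ Finset.univ.filter (fun i : Fin n => (i : ℕ) + 1 < n),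
        lam i ^ (uc (a' : G n) (lastI n (by omega)) * vc (a : G n) i (lastI n (by omega)))) *
      ∏ p ∈ Finset.univ.filter (fun p : Fin n × Fin n => p.1 < p.2 ∧ (p.2 : ℕ) + 1 < n),
        mu p.1 p.2 ^ (vc (a' : G n) p.1 (lastI n (by omega)) *
          vc (a : G n) p.2 (lastI n (by omega))))
    (g : Hsub n → Gsub n → Circle) (hadm : AdmissiblePair n σH g) :
    (∀ j k : Fin n, j < k → (k : ℕ) + 1 < n → mu j k = 1) ∧
    ∀ (a a' : Hsub n) (b : Gsub n),
      g (a * a') b =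
        (∏ i ∈ Finset.univ.filter (fun i : Fin n => (i : ℕ) + 1 < n),
          lam i ^ (uc (b : G n) i *
            (uc (a : G n) (lastI n (by omega)) * uc (a' : G n) (lastI n (by omega))))) *
        (g a b * g a' b) := by
  have hn0 : 0 < n := by omega
  have hσ : ∀ a' a, σH a' a = lamFactor hn0 lam a' a * muFactor hn0 mu a' a := hσH
  have hmu : ∀ j k : Fin n, j < k → (k : ℕ) + 1 < n → mu j k = 1 :=
    fun j k hjk hk => mu_eq_one_of_admissible hn0 hσ hadm hjk hk
  refine ⟨hmu, fun a a' b => ?_⟩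
  rw [hadm.g_add, hσ, hσ, lamFactor_conjH, muFactor_eq_one hn0 hmu, muFactor_eq_one hn0 hmu,
    mul_one, mul_one, mul_inv_cancel_right]

end FreeNilp
end

section
/- Let n ≥ 2 and let σ_H be a multiplier of H(n) of the form σ_H(a′, a) = ∏_{i=1}^{n−1} λ_i^{a′_n a_{in}} with λ_1, …, λ_{n−1} ∈ 𝕋. (Existence) If (σ_H, g) is an admissible pair, then there exists g′ such that (σ_H, g′) is an admissible pair, g′(u_n, u_i) = 1 for all 1 ≤ i ≤ n−1, and the multipliers τ(a′b, ab′) = σ_H(a′, α_b(a)) g(a,b) and τ′(a′b, ab′) = σ_H(a′, α_b(a)) g′(a,b) of G(n) are similar. (Uniqueness) If (σ_H, g) and (σ_H, g′) are both admissible pairs, the associated multipliers τ and τ′ of G(n) are similar, and g(u_n, u_i) = g′(u_n, u_i) for all 1 ≤ i ≤ n−1, then g = g′. -/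
open scoped BigOperators

namespace FreeNilp

/-!
For a fixed `σ_H`, the quotient `g' / g` of two admissible `g`, `g'` is a crossed pairing
`φ : H(n) × G(n-1) → 𝕋` (multiplicative in `a`, and `φ(a, bb') = φ(α_{b'} a, b) φ(a, b')`), and
multiplying an admissible `g` by a crossed pairing keeps it admissible.

Existence: with `cᵢ = g(u_n, u_i)⁻¹`, the bicharacter `(a, b) ↦ ∏ cᵢ ^ (a_n b_i)` is such a pairing,
and on factorizations it is the coboundary of `β(r) = ∏ cᵢ ^ (-r_{in})`, since
`(rs)_{in} = r_{in} + s_{in} + r_i s_n`.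

Uniqueness: a similarity `β` between the two `τ`'s is multiplicative on `H(n)·G(n-1)` and gives
`g'(a, b) / g(a, b) = β(b) β(a) / β(ba)`, which is `1` when `a` and `b` commute. Elements with
vanishing `u`-coordinates are central, so `(g' / g)(u_n, ·)` is a character of `G(n-1)` trivial on
the `u_i` and on the centre, hence trivial, and then `(g' / g)(·, b)` is a character of `H(n)` that
is trivial on `u_n` and on the centre.
-/

section Development

variable {n : ℕ}

namespace G

lemma commute_of_u_eq_zero {z : G n} (hz : ∀ i, z.u i = 0) (r : G n) : Commute z r := by
  refine G.ext (funext fun i => ?_) (funext fun p => ?_)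
  · exact add_comm _ _
  · show z.v p + r.v p + z.u p.1.1 * r.u p.1.2 = r.v p + z.v p + r.u p.1.1 * z.u p.1.2
    rw [hz, hz]; ring

def uHom (n : ℕ) : G n →* Multiplicative (Fin n → ℤ) where
  toFun r := Multiplicative.ofAdd r.u
  map_one' := rfl
  map_mul' _ _ := rfl

lemma zpow_u (r : G n) (m : ℤ) (i : Fin n) : (r ^ m).u i = m * r.u i :=
  congrFun (congrArg Multiplicative.toAdd (map_zpow (uHom n) r m)) i

end G

lemma vc_mul_lastI (hn : 0 < n) (r s : G n) (i : Fin n) :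
    vc (r * s) i (lastI n hn) =
      vc r i (lastI n hn) + vc s i (lastI n hn) + (gpart r : G n).u i * s.u (lastI n hn) := by
  have hlast : ((lastI n hn : Fin n) : ℕ) + 1 = n := Nat.sub_add_cancel hn
  by_cases hi : i < lastI n hn
  · have hi' : (i : ℕ) + 1 ≠ n := by have := Fin.lt_def.mp hi; omega
    simp [vc, hi, gpart, hi']
  · obtain rfl : i = lastI n hn :=
      le_antisymm (Fin.le_def.mpr (by show (i : ℕ) ≤ n - 1; omega)) (not_lt.mp hi)
    simp [vc, gpart, hlast]

lemma map_eq_of_u_eq {M : Type*} [Group M] {K : Subgroup (G n)} (χ : K →* M)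
    (hχ : ∀ k : K, (∀ i, (k : G n).u i = 0) → χ k = 1) {k k' : K}
    (h : ∀ i, (k : G n).u i = (k' : G n).u i) : χ k = χ k' := by
  have hz : ∀ i, ((k'⁻¹ * k : K) : G n).u i = 0 := fun i => by simp [h i]
  rw [← mul_inv_cancel_left k' k, map_mul, hχ _ hz, mul_one]

def uLift (x : Fin n → ℤ) : Gsub n :=
  ⟨⟨fun i => if (i : ℕ) + 1 = n then 0 else x i, fun _ => 0⟩, fun _ hi => if_pos hi, fun _ _ => rfl⟩

lemma uLift_u (x : Fin n → ℤ) (i : Fin n) :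
    ((uLift x : Gsub n) : G n).u i = if (i : ℕ) + 1 = n then 0 else x i := rfl

lemma Gsub.monoidHom_eq_one {M : Type*} [CommGroup M] (χ : Gsub n →* M)
    (hker : ∀ b : Gsub n, (∀ i, (b : G n).u i = 0) → χ b = 1)
    (hgen : ∀ (i : Fin n) (hi : (i : ℕ) + 1 < n), χ (uiG i hi) = 1) (b : Gsub n) :
    χ b = 1 := by
  let ψ : (Fin n → ℤ) →+ Additive M :=
    { toFun x := Additive.ofMul (χ (uLift x))
      map_zero' := by
        rw [map_eq_of_u_eq χ hker (k' := 1) fun i => by simp [uLift_u], map_one]; rfl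
      map_add' x y := by
        rw [map_eq_of_u_eq χ hker (k' := uLift x * uLift y) fun i => ?_, map_mul]
        · rfl
        · simp only [uLift_u, Subgroup.coe_mul, G.mul_u, Pi.add_apply]
          split_ifs <;> simp }
  have hψ : ψ = 0 := by
    ext i
    show Additive.ofMul (χ (uLift (Pi.single i 1))) = Additive.ofMul 1
    congr 1
    by_cases hi : (i : ℕ) + 1 < n
    · rw [map_eq_of_u_eq χ hker (k' := uiG i hi) fun j => ?_, hgen]
      show _ = if j = i then 1 else 0
      rw [uLift_u, Pi.single_apply]
      split_ifs with h1 h2 <;> first | rfl | (subst h2; omega)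
    · refine hker _ fun j => ?_
      rw [uLift_u, Pi.single_apply]
      split_ifs with h1 h2 <;> first | rfl | (subst h2; omega)
  calc χ b = χ (uLift (b : G n).u) := map_eq_of_u_eq χ hker fun i => by
        rw [uLift_u]; split_ifs with h
        · exact (mem_Gsub_iff.mp b.2).1 i h
        · rfl
    _ = 1 := congrArg Additive.toMul (DFunLike.congr_fun hψ (b : G n).u)

lemma unH_u (hn : 0 < n) (i : Fin n) :
    ((unH hn : Hsub n) : G n).u i = if i = lastI n hn then 1 else 0 := rfl

lemma Hsub.u_eq_unH_zpow (hn : 0 < n) (a : Hsub n) (i : Fin n) :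
    (a : G n).u i = ((unH hn ^ (a : G n).u (lastI n hn) : Hsub n) : G n).u i := by
  rw [Subgroup.coe_zpow, G.zpow_u, unH_u]
  split_ifs with h
  · rw [h, mul_one]
  · have : (i : ℕ) ≠ n - 1 := fun h' => h (Fin.ext h')
    rw [(mem_Hsub_iff.mp a.2).1 i (by omega), mul_zero]

lemma eq_one_of_mem_Hsub_of_mem_Gsub {r : G n} (hH : r ∈ Hsub n) (hG : r ∈ Gsub n) : r = 1 := by
  obtain ⟨hHu, hHv⟩ := hH
  obtain ⟨hGu, hGv⟩ := hG
  refine G.ext (funext fun i => ?_) (funext fun p => ?_)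
  · by_cases h : (i : ℕ) + 1 < n
    exacts [hHu i h, hGu i (by omega)]
  · by_cases h : (p.1.2 : ℕ) + 1 < n
    exacts [hHv p h, hGv p (by omega)]

lemma hpart_gpart_eq_of_mul_eq {r : G n} (a : Hsub n) (b : Gsub n) (h : (a : G n) * b = r) :
    hpart r = a ∧ gpart r = b := by
  have hmid : ((a⁻¹ * hpart r : Hsub n) : G n) = ((b * (gpart r)⁻¹ : Gsub n) : G n) := by
    push_cast
    rw [inv_mul_eq_iff_eq_mul, ← mul_assoc, eq_mul_inv_iff_mul_eq, hpart_mul_gpart, h]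
  have h1 := eq_one_of_mem_Hsub_of_mem_Gsub (a⁻¹ * hpart r).2 (hmid ▸ (b * (gpart r)⁻¹).2)
  constructor
  · exact (inv_mul_eq_one.mp (Subtype.ext h1)).symm
  · exact (mul_inv_eq_one.mp (Subtype.ext (hmid.symm.trans h1))).symm

lemma conjH_one (a : Hsub n) : conjH 1 a = a :=
  Subtype.ext (by simp [conjH])

lemma conjH_u (b : Gsub n) (a : Hsub n) (i : Fin n) :
    ((conjH b a : Hsub n) : G n).u i = (a : G n).u i := by
  simp [conjH]

section tauN

variable {σH : Hsub n → Hsub n → Circle} {g : Hsub n → Gsub n → Circle}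

lemma tauN_coe_Hsub_Gsub (hg : AdmissiblePair n σH g) (a : Hsub n) (b : Gsub n) :
    tauN σH g a b = 1 := by
  obtain ⟨ha, ha'⟩ := hpart_gpart_eq_of_mul_eq (r := a) a 1 (by simp)
  obtain ⟨hb, -⟩ := hpart_gpart_eq_of_mul_eq (r := b) 1 b (by simp)
  rw [tauN, ha, ha', hb, conjH_one, hg.g_one_left, (hg.multH.2 _).1, one_mul]

lemma tauN_coe_Gsub_Hsub (hg : AdmissiblePair n σH g) (a : Hsub n) (b : Gsub n) :
    tauN σH g b a = g a b := by
  obtain ⟨hb, hb'⟩ := hpart_gpart_eq_of_mul_eq (r := b) 1 b (by simp)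
  obtain ⟨ha, -⟩ := hpart_gpart_eq_of_mul_eq (r := a) a 1 (by simp)
  rw [tauN, hb, hb', ha, (hg.multH.2 _).2, one_mul]

end tauN

/-- The cocycle identities of `g` in an admissible pair, with `σ_H` trivial. -/
structure IsCrossedPairing {M : Type*} [CommGroup M] (φ : Hsub n → Gsub n → M) : Prop where
  mul_left : ∀ (a a' : Hsub n) (b : Gsub n), φ (a * a') b = φ a b * φ a' b
  mul_right : ∀ (a : Hsub n) (b b' : Gsub n), φ a (b * b') = φ (conjH b' a) b * φ a b'

namespace IsCrossedPairing

variable {M : Type*} [CommGroup M] {φ : Hsub n → Gsub n → M}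

lemma one_left (hφ : IsCrossedPairing φ) (b : Gsub n) : φ 1 b = 1 := by
  simpa using hφ.mul_left 1 1 b

lemma one_right (hφ : IsCrossedPairing φ) (a : Hsub n) : φ a 1 = 1 := by
  simpa [conjH_one] using hφ.mul_right a 1 1

/-- Conjugating `u_n` only changes its central coordinates. -/
lemma unH_mul_right (hφ : IsCrossedPairing φ) (hn : 0 < n)
    (hcomm : ∀ (a : Hsub n) (b : Gsub n), Commute (a : G n) b → φ a b = 1) (b b' : Gsub n) :
    φ (unH hn) (b * b') = φ (unH hn) b * φ (unH hn) b' := by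
  let ψ : Hsub n →* M := MonoidHom.mk' (φ · b) fun a a' => hφ.mul_left a a' b
  have hψ : ψ (conjH b' (unH hn)) = ψ (unH hn) :=
    map_eq_of_u_eq ψ (fun z hz => hcomm z b (G.commute_of_u_eq_zero hz _)) (conjH_u b' _)
  rw [hφ.mul_right]
  exact congrArg (· * φ (unH hn) b') hψ

lemma eq_one (hφ : IsCrossedPairing φ) (hn : 0 < n)
    (hcomm : ∀ (a : Hsub n) (b : Gsub n), Commute (a : G n) b → φ a b = 1)
    (hgen : ∀ (i : Fin n) (hi : (i : ℕ) + 1 < n), φ (unH hn) (uiG i hi) = 1)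
    (a : Hsub n) (b : Gsub n) : φ a b = 1 := by
  let χ : Gsub n →* M := MonoidHom.mk' (φ (unH hn)) (hφ.unH_mul_right hn hcomm)
  have hχ : χ b = 1 := Gsub.monoidHom_eq_one χ
    (fun b hb => hcomm _ b (G.commute_of_u_eq_zero hb _).symm) hgen b
  let ψ : Hsub n →* M := MonoidHom.mk' (φ · b) fun a a' => hφ.mul_left a a' b
  calc φ a b = ψ (unH hn ^ (a : G n).u (lastI n hn)) :=
        map_eq_of_u_eq ψ (fun z hz => hcomm z b (G.commute_of_u_eq_zero hz _))
          (Hsub.u_eq_unH_zpow hn a)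
    _ = 1 := by rw [map_zpow]; exact (congrArg (· ^ _) hχ).trans (one_zpow _)

end IsCrossedPairing

namespace AdmissiblePair

variable {σH : Hsub n → Hsub n → Circle} {g g' φ : Hsub n → Gsub n → Circle}

lemma mul (hg : AdmissiblePair n σH g) (hφ : IsCrossedPairing φ) :
    AdmissiblePair n σH (g * φ) where
  multH := hg.multH
  g_one_right a := by simp [hg.g_one_right, hφ.one_right]
  g_one_left b := by simp [hg.g_one_left, hφ.one_left]
  g_add a a' b := by
    simp only [Pi.mul_apply, hg.g_add, hφ.mul_left]
    ac_rfl
  g_mul a b b' := by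
    simp only [Pi.mul_apply, hg.g_mul, hφ.mul_right]
    ac_rfl

lemma isCrossedPairing_div (hg : AdmissiblePair n σH g) (hg' : AdmissiblePair n σH g') :
    IsCrossedPairing (g' / g) where
  mul_left a a' b := by
    simp only [Pi.div_apply, hg.g_add, hg'.g_add, mul_div_mul_left_eq_div, mul_div_mul_comm]
  mul_right a b b' := by
    simp only [Pi.div_apply, hg.g_mul, hg'.g_mul, mul_div_mul_comm]

lemma eq_of_similar_of_commute (hg : AdmissiblePair n σH g)
    (hg' : AdmissiblePair n σH g') (hsim : Similar (tauN σH g) (tauN σH g'))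
    {a : Hsub n} {b : Gsub n} (hab : Commute (a : G n) b) : g' a b = g a b := by
  obtain ⟨β, hβ⟩ := hsim
  have hβab := hβ a b
  have hβba := hβ b a
  rw [tauN_coe_Hsub_Gsub hg, tauN_coe_Hsub_Gsub hg', mul_one] at hβab
  rw [tauN_coe_Gsub_Hsub hg, tauN_coe_Gsub_Hsub hg'] at hβba
  rw [hβba, ← hab.eq, mul_comm (β b), ← hβab, one_mul]

end AdmissiblePair

noncomputable def charPairing (hn : 0 < n) (c : Fin n → Circle) (a : Hsub n) (b : Gsub n) :
    Circle :=
  ∏ i, c i ^ ((a : G n).u (lastI n hn) * (b : G n).u i)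

section charPairing

variable (hn : 0 < n) (c : Fin n → Circle)

lemma isCrossedPairing_charPairing : IsCrossedPairing (charPairing hn c) where
  mul_left a a' b := by
    simp only [charPairing, ← Finset.prod_mul_distrib, ← zpow_add, Subgroup.coe_mul, G.mul_u,
      add_mul]
  mul_right a b b' := by
    simp only [charPairing, ← Finset.prod_mul_distrib, ← zpow_add, Subgroup.coe_mul, G.mul_u,
      conjH_u, mul_add]

lemma charPairing_unH_uiG (i : Fin n) (hi : (i : ℕ) + 1 < n) :
    charPairing hn c (unH hn) (uiG i hi) = c i := by
  rw [charPairing, Fintype.prod_eq_single i fun j hj => ?_]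
  · simp [unH_u, uiG, uE]
  · simp [uiG, uE, hj]

lemma charPairing_hpart_gpart (r s : G n) :
    charPairing hn c (hpart s) (gpart r) =
      ∏ i, c i ^ (vc (r * s) i (lastI n hn) - vc r i (lastI n hn) - vc s i (lastI n hn)) := by
  have hs : ((hpart s : Hsub n) : G n).u (lastI n hn) = s.u (lastI n hn) :=
    if_pos (Nat.sub_add_cancel hn)
  refine Finset.prod_congr rfl fun i _ => congrArg _ ?_
  rw [vc_mul_lastI, hs]
  ring

lemma similar_tauN_mul_charPairing (σH : Hsub n → Hsub n → Circle)
    (g : Hsub n → Gsub n → Circle) :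
    Similar (tauN σH g) (tauN σH (g * charPairing hn c)) := by
  refine ⟨fun r => ∏ i, c i ^ (-vc r i (lastI n hn)), fun r s => ?_⟩
  have htwist : tauN σH (g * charPairing hn c) r s =
      charPairing hn c (hpart s) (gpart r) * tauN σH g r s := by
    simp only [tauN, Pi.mul_apply]; ac_rfl
  rw [htwist, charPairing_hpart_gpart, ← Finset.prod_inv_distrib, ← Finset.prod_mul_distrib,
    ← Finset.prod_mul_distrib]
  simp only [← zpow_neg, ← zpow_add]
  exact congrArg (· * _) (Finset.prod_congr rfl fun i _ => congrArg _ (by ring))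

end charPairing

end Development

/-- existence and uniqueness of a normalized `g` (with
`g(u_n,u_i) = 1`) in each similarity class. -/
theorem normalized_g_exists_unique (n : ℕ) (hn : 2 ≤ n)
    (σH : Hsub n → Hsub n → Circle) :
    (∀ g : Hsub n → Gsub n → Circle, AdmissiblePair n σH g →
      ∃ g' : Hsub n → Gsub n → Circle, AdmissiblePair n σH g' ∧
        (∀ (i : Fin n) (hi : (i : ℕ) + 1 < n), g' (unH (by omega)) (uiG i hi) = 1) ∧
        Similar (tauN σH g) (tauN σH g')) ∧
    ∀ g g' : Hsub n → Gsub n → Circle, AdmissiblePair n σH g → AdmissiblePair n σH g' →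
      Similar (tauN σH g) (tauN σH g') →
      (∀ (i : Fin n) (hi : (i : ℕ) + 1 < n),
        g (unH (by omega)) (uiG i hi) = g' (unH (by omega)) (uiG i hi)) →
      g = g' := by
  have hn0 : 0 < n := by omega
  refine ⟨fun g hg => ?_, fun g g' hg hg' hsim hgen => ?_⟩
  · let c : Fin n → Circle := fun i =>
      if hi : (i : ℕ) + 1 < n then (g (unH hn0) (uiG i hi))⁻¹ else 1
    refine ⟨g * charPairing hn0 c, hg.mul (isCrossedPairing_charPairing hn0 c), fun i hi => ?_,
      similar_tauN_mul_charPairing hn0 c σH g⟩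
    rw [Pi.mul_apply, Pi.mul_apply, charPairing_unH_uiG]
    simp [c, hi]
  · have hquot : ∀ a b, (g' / g) a b = 1 :=
      (hg.isCrossedPairing_div hg').eq_one hn0
        (fun a b hab => div_eq_one.mpr (hg.eq_of_similar_of_commute hg' hsim hab))
        (fun i hi => div_eq_one.mpr (hgen i hi).symm)
    funext a b
    exact (div_eq_one.mp (hquot a b)).symm

end FreeNilp
end
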